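/- For every n ∈ ℕ the inclusion DC_n ⊆ DC_{n+1} is strict, even restricted to countable systems: for every n ∈ ℕ there exists a countable ARS with two relations that belongs to DC_{n+1} but not to DC_n. -/

import Mathlib

open Relation Function FirstOrder

/-- Reflexive–transitive–symmetric closure (convertibility `↔*`). -/
def Conv {A : Type} (r : A → A → Prop) : A → A → Prop :=
  Relation.ReflTransGen (fun x y => r x y ∨ r y x)

/-- Confluence (CR). -/
def Confluent {A : Type} (r : A → A → Prop) : Prop :=
  ∀ a b c, Relation.ReflTransGen r a b → Relation.ReflTransGen r a c →
    ∃ d, Relation.ReflTransGen r b d ∧ Relation.ReflTransGen r c d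

/-- Local confluence (WCR). -/
def LocallyConfluent {A : Type} (r : A → A → Prop) : Prop :=
  ∀ a b c, r a b → r a c →
    ∃ d, Relation.ReflTransGen r b d ∧ Relation.ReflTransGen r c d

/-- Strong confluence (SC). -/
def StronglyConfluent {A : Type} (r : A → A → Prop) : Prop :=
  ∀ a b c, r a b → r a c →
    ∃ d, (r b d ∨ b = d) ∧ Relation.ReflTransGen r c d

def IsNormalForm {A : Type} (r : A → A → Prop) (a : A) : Prop := ¬ ∃ b, r a b

/-- Unique normal forms (UN). -/
def UN {A : Type} (r : A → A → Prop) : Prop :=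
  ∀ a b, IsNormalForm r a → IsNormalForm r b → Conv r a b → a = b

/-- Unique normal forms w.r.t. reduction (UN→). -/
def UNred {A : Type} (r : A → A → Prop) : Prop :=
  ∀ a b x, IsNormalForm r a → IsNormalForm r b →
    Relation.ReflTransGen r x a → Relation.ReflTransGen r x b → a = b

/-- Normal form property (NFP). -/
def NFP {A : Type} (r : A → A → Prop) : Prop :=
  ∀ a b, IsNormalForm r b → Conv r a b → Relation.ReflTransGen r a b

/-- Acyclicity (AC). -/
def Acyclic {A : Type} (r : A → A → Prop) : Prop :=
  ∀ a b, Relation.TransGen r a b → a ≠ b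

/-- Strong normalisation (SN): no infinite rewrite sequence. -/
def SN {A : Type} (r : A → A → Prop) : Prop :=
  ¬ ∃ f : ℕ → A, ∀ i, r (f i) (f (i + 1))

/-- Weak normalisation (WN). -/
def WN {A : Type} (r : A → A → Prop) : Prop :=
  ∀ a, ∃ b, Relation.ReflTransGen r a b ∧ IsNormalForm r b

/-- Inductive (IND). -/
def Inductive {A : Type} (r : A → A → Prop) : Prop :=
  ∀ f : ℕ → A, (∀ i, r (f i) (f (i + 1))) → ∃ a, ∀ i, Relation.ReflTransGen r (f i) a

/-- Increasing (INC). -/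
def Increasing {A : Type} (r : A → A → Prop) : Prop :=
  ∃ f : A → ℕ, ∀ a b, r a b → f a < f b

/-- A (finite or infinite) reduction sequence. -/
def IsRedSeq {A : Type} (r : A → A → Prop) (f : ℕ → A) : Prop :=
  ∀ i, r (f i) (f (i + 1)) ∨ ∀ j, i ≤ j → f j = f i

/-- Restriction of a relation to a subset. -/
def Restrict {A : Type} (r : A → A → Prop) (S : Set A) : A → A → Prop :=
  fun x y => r x y ∧ x ∈ S ∧ y ∈ S

/-- `f` is cofinal in the restriction of `(A, r)` to `S`. -/
def CofinalIn {A : Type} (r : A → A → Prop) (S : Set A) (f : ℕ → A) : Prop :=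
  ∀ b ∈ S, ∃ i, Relation.ReflTransGen (Restrict r S) b (f i)

/-- Cofinality property (CP). -/
def CP {A : Type} (r : A → A → Prop) : Prop :=
  ∀ a, ∃ f : ℕ → A, IsRedSeq r f ∧ f 0 = a ∧
    (∀ i, Relation.ReflTransGen r a (f i)) ∧
    CofinalIn r {b | Relation.ReflTransGen r a b} f

/-! First-order logic over the language with equality and one binary relation symbol. -/

/-- The `L`-structure on `A` interpreting the binary relation symbol as `r`. -/
def arsStructure (A : Type) (r : A → A → Prop) : FirstOrder.Language.order.Structure A :=
  ⟨fun f => Empty.elim f, fun {n} R v =>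
    match n, R with
    | 2, .le => r (v 0) (v 1)⟩

/-- `(A, r)` models the set of sentences `Φ`. -/
def ModelsSet (A : Type) (r : A → A → Prop) (Φ : Set (FirstOrder.Language.order.Sentence)) :
    Prop :=
  ∀ φ ∈ Φ, @FirstOrder.Language.Sentence.Realize FirstOrder.Language.order A (arsStructure A r) φ

/-- `P` is a generalised first-order property of ARSs. -/
def IsGFOP (P : ∀ A : Type, (A → A → Prop) → Prop) : Prop :=
  ∃ Φ : Set (FirstOrder.Language.order.Sentence),
    ∀ (A : Type), Nonempty A → ∀ r : A → A → Prop, (ModelsSet A r Φ ↔ P A r)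

/-- `P` is a first-order property of ARSs (definable by a single sentence). -/
def IsFOP (P : ∀ A : Type, (A → A → Prop) → Prop) : Prop :=
  ∃ φ : FirstOrder.Language.order.Sentence,
    ∀ (A : Type), Nonempty A → ∀ r : A → A → Prop,
      (@FirstOrder.Language.Sentence.Realize FirstOrder.Language.order A (arsStructure A r) φ
        ↔ P A r)

/-! Decreasing diagrams. -/

/-- Union of the relations with labels below `α`. -/
def Below {A : Type} {I : Type*} (lt : I → I → Prop) (f : I → A → A → Prop) (α : I) :
    A → A → Prop :=
  fun x y => ∃ γ, lt γ α ∧ f γ x y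

/-- Every peak `c ←_β a →_α b` joins by a decreasing elementary diagram. -/
def LocallyDecreasing {A : Type} {I : Type*} (lt : I → I → Prop) (f : I → A → A → Prop) : Prop :=
  ∀ α β a b c, f α a b → f β a c →
    ∃ b' b'' c' c'' d,
      Relation.ReflTransGen (Below lt f α) b b' ∧
      (f β b' b'' ∨ b' = b'') ∧
      Relation.ReflTransGen (fun x y => Below lt f α x y ∨ Below lt f β x y) b'' d ∧
      Relation.ReflTransGen (Below lt f β) c c' ∧
      (f α c' c'' ∨ c' = c'') ∧
      Relation.ReflTransGen (fun x y => Below lt f α x y ∨ Below lt f β x y) c'' d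

/-- Decreasing Church–Rosser with label set the ordinals below `α`. -/
def DCRord (α : Ordinal.{0}) {A : Type} (r : A → A → Prop) : Prop :=
  ∃ f : {β : Ordinal // β < α} → A → A → Prop,
    (∀ x y, r x y ↔ ∃ i, f i x y) ∧
    LocallyDecreasing (fun i j => i.val < j.val) f

/-- Decreasing Church–Rosser (for some ordinal label set). -/
def DCR {A : Type} (r : A → A → Prop) : Prop := ∃ α, DCRord α r

/-- Decreasing commutation: every peak `c ←_β a ⇝_α b` joins decreasingly. -/
def DCommuting {A : Type} {I : Type*} (lt : I → I → Prop) (f g : I → A → A → Prop) : Prop :=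
  ∀ α β a b c, g α a b → f β a c →
    ∃ b' b'' c' c'' d,
      Relation.ReflTransGen (Below lt f α) b b' ∧
      (f β b' b'' ∨ b' = b'') ∧
      Relation.ReflTransGen (fun x y => Below lt f α x y ∨ Below lt f β x y) b'' d ∧
      Relation.ReflTransGen (Below lt g β) c c' ∧
      (g α c' c'' ∨ c' = c'') ∧
      Relation.ReflTransGen (fun x y => Below lt g α x y ∨ Below lt g β x y) c'' d

/-- Decreasing commutation with label set the ordinals below `α` (the class `DC_α`). -/
def DCord (α : Ordinal.{0}) {A : Type} (r s : A → A → Prop) : Prop :=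
  ∃ f g : {β : Ordinal // β < α} → A → A → Prop,
    (∀ x y, r x y ↔ ∃ i, f i x y) ∧
    (∀ x y, s x y ↔ ∃ i, g i x y) ∧
    DCommuting (fun i j => i.val < j.val) f g

namespace Zip

/-- Vertices: `none` is the sink `D`; `some (true, i)` is `p i`; `some (false, i)` is `n i`. -/
abbrev VV : Type := Option (Bool × ℕ)

def pV (i : ℕ) : VV := some (true, i)
def nV (i : ℕ) : VV := some (false, i)
def DV : VV := none

/-- r-edges of `zip_N`: `p 0 → D`; `p (i+1) → n i` (i < N); `n i → D` (i < N). -/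
def rZ (N : ℕ) : VV → VV → Prop := fun u w =>
  (u = pV 0 ∧ w = DV) ∨ (∃ i, i < N ∧ u = pV (i+1) ∧ w = nV i) ∨
  (∃ i, i < N ∧ u = nV i ∧ w = DV)

/-- s-edges of `zip_N`: `p i ⇝ D` (i ≤ N); `n i ⇝ p i` (i < N). -/
def sZ (N : ℕ) : VV → VV → Prop := fun u w =>
  (∃ i, i ≤ N ∧ u = pV i ∧ w = DV) ∨ (∃ i, i < N ∧ u = nV i ∧ w = pV i)

lemma rZ_D {N : ℕ} {w : VV} (h : rZ N DV w) : False := by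
  rcases h with ⟨h1, _⟩ | ⟨i, _, h1, _⟩ | ⟨i, _, h1, _⟩ <;> simp [DV, pV, nV] at h1

lemma sZ_D {N : ℕ} {w : VV} (h : sZ N DV w) : False := by
  rcases h with ⟨i, _, h1, _⟩ | ⟨i, _, h1, _⟩ <;> simp [DV, pV, nV] at h1

lemma rZ_p {N i : ℕ} {w : VV} (h : rZ N (pV i) w) :
    (i = 0 ∧ w = DV) ∨ (∃ j, i = j + 1 ∧ j < N ∧ w = nV j) := by
  rcases h with ⟨h1, h2⟩ | ⟨j, hj, h1, h2⟩ | ⟨j, hj, h1, h2⟩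
  · left; simp [pV] at h1; exact ⟨h1, h2⟩
  · right; simp [pV] at h1; exact ⟨j, h1, hj, h2⟩
  · simp [pV, nV] at h1

lemma rZ_n {N i : ℕ} {w : VV} (h : rZ N (nV i) w) : i < N ∧ w = DV := by
  rcases h with ⟨h1, h2⟩ | ⟨j, hj, h1, h2⟩ | ⟨j, hj, h1, h2⟩
  · simp [pV, nV] at h1
  · simp [pV, nV] at h1
  · simp [nV] at h1; subst h1; exact ⟨hj, h2⟩

lemma sZ_p {N i : ℕ} {w : VV} (h : sZ N (pV i) w) : i ≤ N ∧ w = DV := by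
  rcases h with ⟨j, hj, h1, h2⟩ | ⟨j, hj, h1, h2⟩
  · simp [pV] at h1; subst h1; exact ⟨hj, h2⟩
  · simp [pV, nV] at h1

lemma sZ_n {N i : ℕ} {w : VV} (h : sZ N (nV i) w) : i < N ∧ w = pV i := by
  rcases h with ⟨j, hj, h1, h2⟩ | ⟨j, hj, h1, h2⟩
  · simp [pV, nV] at h1
  · simp [nV] at h1; subst h1; exact ⟨hj, h2⟩

/-- Reflexive-transitive closure from a vertex with no out-steps stays put. -/
lemma rtg_stuck {rel : VV → VV → Prop} {u y : VV} (hrel : ∀ w, ¬ rel u w)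
    (h : Relation.ReflTransGen rel u y) : y = u := by
  rcases (Relation.ReflTransGen.cases_head h) with h | ⟨w, hw, _⟩
  · exact h.symm
  · exact absurd hw (hrel w)

end Zip

namespace Zip

/-- An eventually-constant value for a weakly decreasing ℕ-sequence. -/
lemma evconst (f : ℕ → ℕ) (hf : ∀ m, f (m+1) ≤ f m) : ∃ M, ∀ m, M ≤ m → f m = f M := by
  have hmono : ∀ i j, i ≤ j → f j ≤ f i := by
    intro i j hij
    induction j with
    | zero => simp_all
    | succ j ih =>
      rcases Nat.lt_or_ge i (j+1) with h | h
      · exact le_trans (hf j) (ih (by omega))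
      · have : i = j + 1 := by omega
        subst this; exact le_rfl
  have hne : (Set.range f).Nonempty := ⟨f 0, 0, rfl⟩
  obtain ⟨M, hM⟩ := Nat.sInf_mem hne
  refine ⟨M, fun m hm => ?_⟩
  have h1 : f m ≤ f M := hmono M m hm
  have h2 : sInf (Set.range f) ≤ f m := Nat.sInf_le ⟨m, rfl⟩
  omega

/-- No infinite strict descent. -/
lemma nodesc (t : ℕ → ℕ) (M : ℕ) (h : ∀ m, M ≤ m → t (m+1) < t m) : False := by
  have key : ∀ d, t (M + d) + d ≤ t M := by
    intro d
    induction d with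
    | zero => simp
    | succ d ih =>
      have hh := h (M + d) (by omega)
      have he : M + (d+1) = (M+d) + 1 := by omega
      rw [he]
      omega
  have := key (t M + 1)
  omega

section NoSeq

variable (a x t v : ℕ → ℕ)

/-- Core case B1/A-like final contradiction: from some point on, both
`x m < t m` and `t (m+1) < x m`. -/
lemma noseq_final (M : ℕ) (hxt : ∀ m, M ≤ m → x m < t m)
    (htx : ∀ m, M ≤ m → t (m+1) < x m) : False := by
  apply nodesc t M
  intro m hm
  have := hxt m hm
  have := htx m hm
  omega

variable
  (h1 : ∀ m, t (m+1) < x m ∨ t (m+1) ≤ a m)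
  (h2 : ∀ m, a (m+1) < max (a m) (x m) ∨ (a (m+1) ≤ a m ∧ t (m+1) < x m))
  (h3 : ∀ m, x m < t m ∨ x m ≤ v m)
  (h4 : ∀ m, v (m+1) < max (t m) (v m) ∨ (v (m+1) ≤ v m ∧ x m < t m))

include h1 h2 h3 h4

/-- Case analysis under the assumption that the global max `P` is constant `c`. -/
lemma noseq_const (c : ℕ) (hP : ∀ m, max (max (a m) (x m)) (max (t m) (v m)) = c) : False := by
  by_cases hA : ∀ m, a m = c
  · -- Case A: a ≡ c
    have htx : ∀ m, t (m+1) < x m := by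
      intro m
      rcases h2 m with h | h
      · have h5 := hP m; have h6 := hA m; have h7 := hA (m+1); omega
      · exact h.2
    -- W := max t v is weakly decreasing
    have hW : ∀ m, max (t (m+1)) (v (m+1)) ≤ max (t m) (v m) := by
      intro m
      have hx := h3 m
      have ht := htx m
      have hv := h4 m
      omega
    obtain ⟨M1, hM1⟩ := evconst (fun m => max (t m) (v m)) hW
    -- on the tail, v = w and hence x < t
    have hxt : ∀ m, M1 ≤ m → x m < t m := by
      intro m hm
      have e1 := hM1 m hm
      have e2 := hM1 (m+1) (by omega)
      have ht := htx m
      have hx := h3 m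
      have hv := h4 m
      omega
    exact noseq_final x t (M1) hxt (fun m _ => htx m)
  · -- Case B: a < c from some point on
    push_neg at hA
    obtain ⟨m0, hm0⟩ := hA
    have ham0 : a m0 < c := by have := hP m0; omega
    have hB : ∀ m, m0 ≤ m → a m < c := by
      intro m hm
      induction m with
      | zero => have : m0 = 0 := by omega
                subst this; exact ham0
      | succ m ih =>
        rcases Nat.lt_or_ge m0 (m+1) with h | h
        · have ham := ih (by omega)
          rcases h2 m with h' | h'
          · have := hP m; omega
          · omega
        · have : m0 = m + 1 := by omega
          subst this; exact ham0
    -- attainment: t m = c ∨ v m = c for m ≥ m0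
    have hattain : ∀ m, m0 ≤ m → (t m = c ∨ v m = c) := by
      intro m hm
      have hpm := hP m
      have ham := hB m hm
      have hx := h3 m
      omega
    by_cases hBv : ∀ m, m0 ≤ m → v m = c
    · -- B1 : v ≡ c on tail; then x < t on tail
      have hxt : ∀ m, m0 ≤ m → x m < t m := by
        intro m hm
        rcases h4 m with h | h
        · have := hP m
          have := hBv m hm
          have := hBv (m+1) (by omega)
          omega
        · exact h.2
      -- U := max a x weakly decreasing on tail
      have hU : ∀ m, m0 ≤ m → max (a (m+1)) (x (m+1)) ≤ max (a m) (x m) := by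
        intro m hm
        have ha' := h2 m
        have ht' := h1 m
        have hx' := hxt (m+1) (by omega)
        omega
      obtain ⟨M2, hM2⟩ := evconst (fun m => max (a (m0+m)) (x (m0+m)))
        (fun m => by
          have := hU (m0+m) (by omega)
          have he : m0 + (m+1) = (m0+m) + 1 := by omega
          simp only [he]
          omega)
      set u := max (a (m0+M2)) (x (m0+M2)) with hu
      have hUconst : ∀ m, m0 + M2 ≤ m → max (a m) (x m) = u := by
        intro m hm
        have := hM2 (m - m0) (by omega)
        have hmm : m0 + (m - m0) = m := by omega
        rw [hmm] at this
        exact this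
      have hau : ∀ m, m0 + M2 ≤ m → a (m+1) = u := by
        intro m hm
        have e1 := hUconst m hm
        have e2 := hUconst (m+1) (by omega)
        have ht' := h1 m
        have hx' := hxt (m+1) (by omega)
        omega
      -- final descent
      apply noseq_final x t (m0 + M2 + 1) (fun m hm => hxt m (by omega))
      intro m hm
      rcases h2 m with h | h
      · exfalso
        have e1 := hUconst m (by omega)
        have e2 := hau m (by omega)
        have e3 := hau (m-1) (by omega)
        have hmm : m - 1 + 1 = m := by omega
        rw [hmm] at e3
        omega
      · exact h.2
    · -- B2 : v < c from some point on; then t ≡ c, contradiction with h1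
      push_neg at hBv
      obtain ⟨m1, hm1le, hm1⟩ := hBv
      have hvm1 : v m1 < c := by have := hP m1; omega
      have hBvlt : ∀ m, m1 ≤ m → v m < c := by
        intro m hm
        induction m with
        | zero => have : m1 = 0 := by omega
                  subst this; exact hvm1
        | succ m ih =>
          rcases Nat.lt_or_ge m1 (m+1) with h | h
          · have hvm := ih (by omega)
            rcases h4 m with h' | h'
            · have := hP m; omega
            · omega
          · have : m1 = m + 1 := by omega
            subst this; exact hvm1
      have ht1 : t (m1+1) = c := by
        rcases hattain (m1+1) (by omega) with h | h
        · exact h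
        · have := hBvlt (m1+1) (by omega); omega
      rcases h1 m1 with h | h
      · have := hP m1; omega
      · have := hB m1 hm1le; omega

end NoSeq

end Zip

namespace Zip

lemma noseq (a x t v : ℕ → ℕ)
    (h1 : ∀ m, t (m+1) < x m ∨ t (m+1) ≤ a m)
    (h2 : ∀ m, a (m+1) < max (a m) (x m) ∨ (a (m+1) ≤ a m ∧ t (m+1) < x m))
    (h3 : ∀ m, x m < t m ∨ x m ≤ v m)
    (h4 : ∀ m, v (m+1) < max (t m) (v m) ∨ (v (m+1) ≤ v m ∧ x m < t m)) : False := by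
  have hP : ∀ m, max (max (a (m+1)) (x (m+1))) (max (t (m+1)) (v (m+1))) ≤
      max (max (a m) (x m)) (max (t m) (v m)) := by
    intro m
    have ha := h2 m
    have ht := h1 m
    have hv := h4 m
    have hx := h3 (m+1)
    omega
  obtain ⟨M0, hM0⟩ := evconst (fun m => max (max (a m) (x m)) (max (t m) (v m))) hP
  apply noseq_const (fun m => a (M0+m)) (fun m => x (M0+m)) (fun m => t (M0+m))
      (fun m => v (M0+m))
      (fun m => by have := h1 (M0+m); have he : M0 + (m+1) = (M0+m)+1 := by omega
                   rw [he]; exact this)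
      (fun m => by have := h2 (M0+m); have he : M0 + (m+1) = (M0+m)+1 := by omega
                   rw [he]; exact this)
      (fun m => h3 (M0+m))
      (fun m => by have := h4 (M0+m); have he : M0 + (m+1) = (M0+m)+1 := by omega
                   rw [he]; exact this)
      (max (max (a M0) (x M0)) (max (t M0) (v M0)))
  intro m
  have := hM0 (M0+m) (by omega)
  simpa using this

end Zip

namespace Zip

def Lab (n m : ℕ) (hm : m < n) : {β : Ordinal // β < (n : Ordinal)} :=
  ⟨(m : Ordinal), by exact_mod_cast hm⟩

lemma lab_surj {n : ℕ} (i : {β : Ordinal // β < (n : Ordinal)}) :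
    ∃ m : ℕ, ∃ hm : m < n, i = Lab n m hm := by
  obtain ⟨m, hm⟩ := Ordinal.lt_omega0.mp (lt_of_lt_of_le i.2 (Ordinal.nat_lt_omega0 n).le)
  have hmn : m < n := by
    have := i.2
    rw [hm] at this
    exact_mod_cast this
  exact ⟨m, hmn, Subtype.ext hm⟩

section Negative

variable {n N : ℕ} {f g : {β : Ordinal // β < (n : Ordinal)} → VV → VV → Prop}

/-- label sets (as sets of naturals) of the four kinds of relevant edges -/
def ZsG (g : {β : Ordinal // β < (n : Ordinal)} → VV → VV → Prop) (j : ℕ) : Set ℕ :=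
  {m | ∃ hm : m < n, g (Lab n m hm) (pV j) DV}
def TsG (g : {β : Ordinal // β < (n : Ordinal)} → VV → VV → Prop) (j : ℕ) : Set ℕ :=
  {m | ∃ hm : m < n, g (Lab n m hm) (nV j) (pV j)}
def XsF (f : {β : Ordinal // β < (n : Ordinal)} → VV → VV → Prop) (j : ℕ) : Set ℕ :=
  {m | ∃ hm : m < n, f (Lab n m hm) (pV (j+1)) (nV j)}
def VsF (f : {β : Ordinal // β < (n : Ordinal)} → VV → VV → Prop) (j : ℕ) : Set ℕ :=
  {m | ∃ hm : m < n, f (Lab n m hm) (nV j) DV}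

lemma below_elim {h : {β : Ordinal // β < (n : Ordinal)} → VV → VV → Prop}
    {ι : {β : Ordinal // β < (n : Ordinal)}} {u w : VV}
    (hb : Below (fun i j : {β : Ordinal // β < (n : Ordinal)} => i.val < j.val) h ι u w) :
    ∃ m : ℕ, ∃ hm : m < n, h (Lab n m hm) u w ∧ (m : Ordinal) < ι.val := by
  obtain ⟨γ, hlt, hγ⟩ := hb
  obtain ⟨m, hm, rfl⟩ := lab_surj γ
  exact ⟨m, hm, hγ, hlt⟩

lemma lab_lt_nat {m m' : ℕ} {hm' : m' < n} (h : (m : Ordinal) < (Lab n m' hm').val) :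
    m < m' := by
  have h2 : (m : Ordinal) < (m' : Ordinal) := h
  exact_mod_cast h2

variable (hr : ∀ x y, rZ N x y ↔ ∃ i, f i x y) (hs : ∀ x y, sZ N x y ↔ ∃ i, g i x y)
variable (hDC : DCommuting (fun i j : {β : Ordinal // β < (n : Ordinal)} => i.val < j.val) f g)

include hr in
lemma f_sub : ∀ i x y, f i x y → rZ N x y := fun i x y h => (hr x y).mpr ⟨i, h⟩

include hs in
lemma g_sub : ∀ i x y, g i x y → sZ N x y := fun i x y h => (hs x y).mpr ⟨i, h⟩

include hr hs hDC in
/-- Extraction of the B-constraint from the peak at `p (j+1)`. -/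
lemma extractB (j : ℕ) (aα bβ : ℕ) (ha : aα ∈ ZsG g (j+1)) (hb : bβ ∈ XsF f j) :
    ∃ d1 d2 : ℕ, d1 ∈ TsG g j ∧ d2 ∈ ZsG g j ∧
      (d1 < bβ ∨ d1 < aα ∨ d1 = aα) ∧
      (d2 < aα ∨ d2 < bβ ∨ (d2 = aα ∧ d1 < bβ)) := by
  obtain ⟨haa, hga⟩ := ha
  obtain ⟨hbb, hfb⟩ := hb
  obtain ⟨b', b'', c', c'', d, H1, H2, H3, H4, H5, H6⟩ :=
    hDC (Lab n aα haa) (Lab n bβ hbb) (pV (j+1)) DV (nV j) hga hfb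
  -- b-side: everything stuck at DV
  have hstuckf : ∀ (ι κ : {β : Ordinal // β < (n : Ordinal)}) (w : VV),
      ¬ (Below (fun i j => i.val < j.val) f ι DV w ∨
         Below (fun i j => i.val < j.val) f κ DV w) := by
    rintro ι κ w (hb | hb) <;>
      · obtain ⟨m, hm, hstep, _⟩ := below_elim hb
        exact rZ_D (f_sub hr _ _ _ hstep)
  have hb' : b' = DV := rtg_stuck (fun w hw => hstuckf (Lab n aα haa) (Lab n aα haa) w
    (Or.inl hw)) H1
  subst hb'
  have hb'' : b'' = DV := by
    rcases H2 with H2 | H2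
    · exact absurd (f_sub hr _ _ _ H2) rZ_D
    · exact H2.symm
  subst hb''
  have hd : d = DV := rtg_stuck (fun w hw => hstuckf _ _ w hw) H3
  subst hd
  -- c-side analysis
  -- step elim helpers
  have gstep_n : ∀ (ι : {β : Ordinal // β < (n : Ordinal)}) (w : VV),
      Below (fun i j => i.val < j.val) g ι (nV j) w →
      ∃ m, m ∈ TsG g j ∧ (m:Ordinal) < ι.val ∧ w = pV j := by
    intro ι w hw
    obtain ⟨m, hm, hstep, hlt⟩ := below_elim hw
    have := sZ_n (g_sub hs _ _ _ hstep)
    exact ⟨m, ⟨hm, this.2 ▸ hstep⟩, hlt, this.2⟩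
  have gstep_p : ∀ (ι : {β : Ordinal // β < (n : Ordinal)}) (w : VV),
      Below (fun i j => i.val < j.val) g ι (pV j) w →
      ∃ m, m ∈ ZsG g j ∧ (m:Ordinal) < ι.val ∧ w = DV := by
    intro ι w hw
    obtain ⟨m, hm, hstep, hlt⟩ := below_elim hw
    have := sZ_p (g_sub hs _ _ _ hstep)
    exact ⟨m, ⟨hm, this.2 ▸ hstep⟩, hlt, this.2⟩
  -- last leg: from pV j, a mixed RTG to DV must start with a step in Z_j below α or β
  have lastleg : Relation.ReflTransGen (fun x y =>
      Below (fun i j => i.val < j.val) g (Lab n aα haa) x y ∨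
      Below (fun i j => i.val < j.val) g (Lab n bβ hbb) x y) (pV j) DV →
      ∃ d2, d2 ∈ ZsG g j ∧ (d2 < aα ∨ d2 < bβ) := by
    intro h
    rcases h.cases_head with h | ⟨w, hw, _⟩
    · exact absurd h (by simp [DV, pV])
    · rcases hw with hw | hw
      · obtain ⟨m, hmem, hlt, _⟩ := gstep_p _ _ hw
        exact ⟨m, hmem, Or.inl (lab_lt_nat hlt)⟩
      · obtain ⟨m, hmem, hlt, _⟩ := gstep_p _ _ hw
        exact ⟨m, hmem, Or.inr (lab_lt_nat hlt)⟩
  rcases H4.cases_head with hc' | ⟨w1, hw1, H4'⟩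
  · -- c' = nV j
    subst hc'
    rcases H5 with H5 | H5
    · -- middle step used at nV j : c'' = pV j, α ∈ T j
      have hss := sZ_n (g_sub hs _ _ _ H5)
      have hd1 : aα ∈ TsG g j := ⟨haa, hss.2 ▸ H5⟩
      rw [hss.2] at H6
      obtain ⟨d2, hd2, hor⟩ := lastleg H6
      exact ⟨aα, d2, hd1, hd2, Or.inr (Or.inr rfl),
        by rcases hor with h | h; exacts [Or.inl h, Or.inr (Or.inl h)]⟩
    · -- no middle step: mixed RTG from nV j to DV
      rw [← H5] at H6
      rcases H6.cases_head with h | ⟨w2, hw2, H6'⟩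
      · exact absurd h (by simp [DV, nV])
      · have step1 : ∃ m, m ∈ TsG g j ∧ (m < aα ∨ m < bβ) ∧ w2 = pV j := by
          rcases hw2 with hw2 | hw2
          · obtain ⟨m, hmem, hlt, hww⟩ := gstep_n _ _ hw2
            exact ⟨m, hmem, Or.inl (lab_lt_nat hlt), hww⟩
          · obtain ⟨m, hmem, hlt, hww⟩ := gstep_n _ _ hw2
            exact ⟨m, hmem, Or.inr (lab_lt_nat hlt), hww⟩
        obtain ⟨d1, hd1, hor1, hww⟩ := step1
        rw [hww] at H6'
        obtain ⟨d2, hd2, hor2⟩ := lastleg H6'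
        refine ⟨d1, d2, hd1, hd2, ?_, ?_⟩
        · rcases hor1 with h | h; exacts [Or.inr (Or.inl h), Or.inl h]
        · rcases hor2 with h | h; exacts [Or.inl h, Or.inr (Or.inl h)]
  · -- first leg took a step: w1 = pV j with label < β in T j
    obtain ⟨d1, hd1, hlt1, hww⟩ := gstep_n _ _ hw1
    have hd1b : d1 < bβ := lab_lt_nat hlt1
    rw [hww] at H4'
    rcases H4'.cases_head with hc' | ⟨w2, hw2, H4''⟩
    · -- c' = pV j
      subst hc'
      rcases H5 with H5 | H5
      · -- middle step at pV j : c'' = DV, α ∈ Z j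
        have hss := sZ_p (g_sub hs _ _ _ H5)
        exact ⟨d1, aα, hd1, ⟨haa, hss.2 ▸ H5⟩, Or.inl hd1b,
          Or.inr (Or.inr ⟨rfl, hd1b⟩)⟩
      · rw [← H5] at H6
        obtain ⟨d2, hd2, hor2⟩ := lastleg H6
        exact ⟨d1, d2, hd1, hd2, Or.inl hd1b,
          by rcases hor2 with h | h; exacts [Or.inl h, Or.inr (Or.inl h)]⟩
    · -- second step with label < β in Z j
      obtain ⟨d2, hd2, hlt2, _⟩ := gstep_p _ _ hw2
      exact ⟨d1, d2, hd1, hd2, Or.inl hd1b, Or.inr (Or.inl (lab_lt_nat hlt2))⟩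

end Negative

end Zip

namespace Zip

section Negative2

variable {n N : ℕ} {f g : {β : Ordinal // β < (n : Ordinal)} → VV → VV → Prop}
variable (hr : ∀ x y, rZ N x y ↔ ∃ i, f i x y) (hs : ∀ x y, sZ N x y ↔ ∃ i, g i x y)
variable (hDC : DCommuting (fun i j : {β : Ordinal // β < (n : Ordinal)} => i.val < j.val) f g)

include hr hs hDC in
/-- Extraction of the N-constraint from the peak at `n (j+1)`. -/
lemma extractN (j : ℕ) (aα bβ : ℕ) (ha : aα ∈ TsG g (j+1)) (hb : bβ ∈ VsF f (j+1)) :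
    ∃ ξ ν : ℕ, ξ ∈ XsF f j ∧ ν ∈ VsF f j ∧
      (ξ < aα ∨ ξ < bβ ∨ ξ = bβ) ∧
      (ν < bβ ∨ ν < aα ∨ (ν = bβ ∧ ξ < aα)) := by
  obtain ⟨haa, hga⟩ := ha
  obtain ⟨hbb, hfb⟩ := hb
  obtain ⟨b', b'', c', c'', d, H1, H2, H3, H4, H5, H6⟩ :=
    hDC (Lab n aα haa) (Lab n bβ hbb) (nV (j+1)) (pV (j+1)) DV hga hfb
  -- c-side: everything stuck at DV
  have hstuckg : ∀ (ι κ : {β : Ordinal // β < (n : Ordinal)}) (w : VV),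
      ¬ (Below (fun i j => i.val < j.val) g ι DV w ∨
         Below (fun i j => i.val < j.val) g κ DV w) := by
    rintro ι κ w (hb | hb) <;>
      · obtain ⟨m, hm, hstep, _⟩ := below_elim hb
        exact sZ_D (g_sub hs _ _ _ hstep)
  have hc' : c' = DV := rtg_stuck (fun w hw => hstuckg (Lab n bβ hbb) (Lab n bβ hbb) w
    (Or.inl hw)) H4
  subst hc'
  have hc'' : c'' = DV := by
    rcases H5 with H5 | H5
    · exact absurd (g_sub hs _ _ _ H5) sZ_D
    · exact H5.symm
  subst hc''
  have hd : d = DV := rtg_stuck (fun w hw => hstuckg _ _ w hw) H6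
  subst hd
  -- b-side analysis: r-steps from pV (j+1) go to nV j; from nV j to DV
  have fstep_p : ∀ (ι : {β : Ordinal // β < (n : Ordinal)}) (w : VV),
      Below (fun i j => i.val < j.val) f ι (pV (j+1)) w →
      ∃ m, m ∈ XsF f j ∧ (m:Ordinal) < ι.val ∧ w = nV j := by
    intro ι w hw
    obtain ⟨m, hm, hstep, hlt⟩ := below_elim hw
    rcases rZ_p (f_sub hr _ _ _ hstep) with ⟨h0, _⟩ | ⟨j', hj', _, hww⟩
    · omega
    · have : j' = j := by omega
      subst this
      exact ⟨m, ⟨hm, hww ▸ hstep⟩, hlt, hww⟩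
  have fstep_n : ∀ (ι : {β : Ordinal // β < (n : Ordinal)}) (w : VV),
      Below (fun i j => i.val < j.val) f ι (nV j) w →
      ∃ m, m ∈ VsF f j ∧ (m:Ordinal) < ι.val ∧ w = DV := by
    intro ι w hw
    obtain ⟨m, hm, hstep, hlt⟩ := below_elim hw
    have := rZ_n (f_sub hr _ _ _ hstep)
    exact ⟨m, ⟨hm, this.2 ▸ hstep⟩, hlt, this.2⟩
  have lastleg : Relation.ReflTransGen (fun x y =>
      Below (fun i j => i.val < j.val) f (Lab n aα haa) x y ∨
      Below (fun i j => i.val < j.val) f (Lab n bβ hbb) x y) (nV j) DV →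
      ∃ m, m ∈ VsF f j ∧ (m < aα ∨ m < bβ) := by
    intro h
    rcases h.cases_head with h | ⟨w, hw, _⟩
    · exact absurd h (by simp [DV, nV])
    · rcases hw with hw | hw
      · obtain ⟨m, hmem, hlt, _⟩ := fstep_n _ _ hw
        exact ⟨m, hmem, Or.inl (lab_lt_nat hlt)⟩
      · obtain ⟨m, hmem, hlt, _⟩ := fstep_n _ _ hw
        exact ⟨m, hmem, Or.inr (lab_lt_nat hlt)⟩
  rcases H1.cases_head with hb' | ⟨w1, hw1, H1'⟩
  · -- b' = pV (j+1)
    subst hb'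
    rcases H2 with H2 | H2
    · -- middle step: b'' = nV j, β ∈ X j
      rcases rZ_p (f_sub hr _ _ _ H2) with ⟨h0, _⟩ | ⟨j', hj', _, hww⟩
      · omega
      · have : j' = j := by omega
        subst this
        rw [hww] at H3
        obtain ⟨ν, hν, hor⟩ := lastleg H3
        exact ⟨bβ, ν, ⟨hbb, hww ▸ H2⟩, hν, Or.inr (Or.inr rfl),
          by rcases hor with h | h; exacts [Or.inr (Or.inl h), Or.inl h]⟩
    · rw [← H2] at H3
      rcases H3.cases_head with h | ⟨w2, hw2, H3'⟩
      · exact absurd h (by simp [DV, pV])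
      · have step1 : ∃ m, m ∈ XsF f j ∧ (m < aα ∨ m < bβ) ∧ w2 = nV j := by
          rcases hw2 with hw2 | hw2
          · obtain ⟨m, hmem, hlt, hww⟩ := fstep_p _ _ hw2
            exact ⟨m, hmem, Or.inl (lab_lt_nat hlt), hww⟩
          · obtain ⟨m, hmem, hlt, hww⟩ := fstep_p _ _ hw2
            exact ⟨m, hmem, Or.inr (lab_lt_nat hlt), hww⟩
        obtain ⟨ξ, hξ, hor1, hww⟩ := step1
        rw [hww] at H3'
        obtain ⟨ν, hν, hor2⟩ := lastleg H3'
        refine ⟨ξ, ν, hξ, hν, ?_, ?_⟩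
        · rcases hor1 with h | h; exacts [Or.inl h, Or.inr (Or.inl h)]
        · rcases hor2 with h | h; exacts [Or.inr (Or.inl h), Or.inl h]
  · -- first leg step: w1 = nV j with label < α in X j
    obtain ⟨ξ, hξ, hlt1, hww⟩ := fstep_p _ _ hw1
    have hξa : ξ < aα := lab_lt_nat hlt1
    rw [hww] at H1'
    rcases H1'.cases_head with hb' | ⟨w2, hw2, H1''⟩
    · -- b' = nV j
      subst hb'
      rcases H2 with H2 | H2
      · -- middle step at nV j : b'' = DV, β ∈ V j
        have hrr := rZ_n (f_sub hr _ _ _ H2)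
        exact ⟨ξ, bβ, hξ, ⟨hbb, hrr.2 ▸ H2⟩, Or.inl hξa,
          Or.inr (Or.inr ⟨rfl, hξa⟩)⟩
      · rw [← H2] at H3
        obtain ⟨ν, hν, hor2⟩ := lastleg H3
        exact ⟨ξ, ν, hξ, hν, Or.inl hξa,
          by rcases hor2 with h | h; exacts [Or.inr (Or.inl h), Or.inl h]⟩
    · -- second step: label < α in V j
      obtain ⟨ν, hν, hlt2, _⟩ := fstep_n _ _ hw2
      exact ⟨ξ, ν, hξ, hν, Or.inl hξa, Or.inr (Or.inl (lab_lt_nat hlt2))⟩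

end Negative2

end Zip

namespace Zip

theorem not_dc (n N : ℕ) (hn : 1 ≤ n) (hN : n^4 + 2 ≤ N) :
    ¬ DCord (n : Ordinal) (rZ N) (sZ N) := by
  rintro ⟨f, g, hr, hs, hDC⟩
  -- nonemptiness of the label sets
  have hZne : ∀ j, j ≤ N → (ZsG g j).Nonempty := by
    intro j hj
    have : sZ N (pV j) DV := Or.inl ⟨j, hj, rfl, rfl⟩
    obtain ⟨i, hi⟩ := (hs _ _).mp this
    obtain ⟨m, hm, rfl⟩ := lab_surj i
    exact ⟨m, hm, hi⟩
  have hTne : ∀ j, j < N → (TsG g j).Nonempty := by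
    intro j hj
    have : sZ N (nV j) (pV j) := Or.inr ⟨j, hj, rfl, rfl⟩
    obtain ⟨i, hi⟩ := (hs _ _).mp this
    obtain ⟨m, hm, rfl⟩ := lab_surj i
    exact ⟨m, hm, hi⟩
  have hXne : ∀ j, j < N → (XsF f j).Nonempty := by
    intro j hj
    have : rZ N (pV (j+1)) (nV j) := Or.inr (Or.inl ⟨j, hj, rfl, rfl⟩)
    obtain ⟨i, hi⟩ := (hr _ _).mp this
    obtain ⟨m, hm, rfl⟩ := lab_surj i
    exact ⟨m, hm, hi⟩
  have hVne : ∀ j, j < N → (VsF f j).Nonempty := by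
    intro j hj
    have : rZ N (nV j) DV := Or.inr (Or.inr ⟨j, hj, rfl, rfl⟩)
    obtain ⟨i, hi⟩ := (hr _ _).mp this
    obtain ⟨m, hm, rfl⟩ := lab_surj i
    exact ⟨m, hm, hi⟩
  set A : ℕ → ℕ := fun l => sInf (ZsG g l) with hA
  set X : ℕ → ℕ := fun l => sInf (XsF f l) with hX
  set T : ℕ → ℕ := fun l => sInf (TsG g l) with hT
  set V : ℕ → ℕ := fun l => sInf (VsF f l) with hV
  -- bounds
  have bZ : ∀ j, j ≤ N → A j < n := by
    intro j hj; obtain ⟨hm, _⟩ := Nat.sInf_mem (hZne j hj); exact hm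
  have bX : ∀ j, j < N → X j < n := by
    intro j hj; obtain ⟨hm, _⟩ := Nat.sInf_mem (hXne j hj); exact hm
  have bT : ∀ j, j < N → T j < n := by
    intro j hj; obtain ⟨hm, _⟩ := Nat.sInf_mem (hTne j hj); exact hm
  have bV : ∀ j, j < N → V j < n := by
    intro j hj; obtain ⟨hm, _⟩ := Nat.sInf_mem (hVne j hj); exact hm
  -- pigeonhole on levels 1..N-1
  have hpig : ∃ l1 ∈ Finset.Icc 1 (N-1), ∃ l2 ∈ Finset.Icc 1 (N-1), l1 ≠ l2 ∧
      (A l1, X (l1-1), T l1, V l1) = (A l2, X (l2-1), T l2, V l2) := by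
    apply Finset.exists_ne_map_eq_of_card_lt_of_maps_to
    · have h1 : (Finset.Icc 1 (N-1)).card = N - 1 := by
        rw [Nat.card_Icc]; omega
      have h2 : ((Finset.range n) ×ˢ (Finset.range n) ×ˢ (Finset.range n) ×ˢ
          (Finset.range n)).card = n^4 := by
        simp [Finset.card_product]; ring
      rw [h1, h2]; omega
    · intro l hl
      simp only [Finset.mem_coe, Finset.mem_Icc] at hl ⊢
      simp only [Finset.mem_product, Finset.mem_range]
      exact ⟨bZ l (by omega), bX (l-1) (by omega), bT l (by omega), bV l (by omega)⟩
  obtain ⟨l1, hl1, l2, hl2, hne, heq⟩ := hpig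
  rw [Finset.mem_Icc] at hl1 hl2
  -- wlog l1 < l2
  wlog hlt : l1 < l2 generalizing l1 l2
  · exact this l2 hl2 l1 hl1 hne.symm heq.symm (by omega)
  rw [Prod.mk.injEq, Prod.mk.injEq, Prod.mk.injEq] at heq
  obtain ⟨eA, eX, eT, eV⟩ := heq
  -- the per-level constraints
  have CB : ∀ l, 1 ≤ l → l ≤ N - 1 →
      (T (l-1) < X (l-1) ∨ T (l-1) ≤ A l) ∧
      (A (l-1) < max (A l) (X (l-1)) ∨ (A (l-1) ≤ A l ∧ T (l-1) < X (l-1))) := by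
    intro l h1l h2l
    have ha : A l ∈ ZsG g ((l-1)+1) := by
      have hll : l - 1 + 1 = l := by omega
      rw [hll]
      exact Nat.sInf_mem (hZne l (by omega))
    have hb : X (l-1) ∈ XsF f (l-1) := Nat.sInf_mem (hXne (l-1) (by omega))
    obtain ⟨d1, d2, hd1, hd2, hc1, hc2⟩ := extractB hr hs hDC (l-1) (A l) (X (l-1)) ha hb
    have e1 : T (l-1) ≤ d1 := Nat.sInf_le hd1
    have e2 : A (l-1) ≤ d2 := Nat.sInf_le hd2
    omega
  have CN : ∀ l, 1 ≤ l → l ≤ N - 1 →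
      (X (l-1) < T l ∨ X (l-1) ≤ V l) ∧
      (V (l-1) < max (T l) (V l) ∨ (V (l-1) ≤ V l ∧ X (l-1) < T l)) := by
    intro l h1l h2l
    have ha : T l ∈ TsG g ((l-1)+1) := by
      have hll : l - 1 + 1 = l := by omega
      rw [hll]
      exact Nat.sInf_mem (hTne l (by omega))
    have hb : V l ∈ VsF f ((l-1)+1) := by
      have hll : l - 1 + 1 = l := by omega
      rw [hll]
      exact Nat.sInf_mem (hVne l (by omega))
    obtain ⟨xi, nu, hxi, hnu, hc1, hc2⟩ := extractN hr hs hDC (l-1) (T l) (V l) ha hb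
    have e1 : X (l-1) ≤ xi := Nat.sInf_le hxi
    have e2 : V (l-1) ≤ nu := Nat.sInf_le hnu
    omega
  -- the periodic level sequence
  set per := l2 - l1 with hper
  have hper0 : 0 < per := by omega
  set lv : ℕ → ℕ := fun m => l2 - (m % per) with hlv
  have hlv_lb : ∀ m, l1 + 1 ≤ lv m ∧ lv m ≤ l2 := by
    intro m
    have := Nat.mod_lt m hper0
    simp only [hlv]
    omega
  have hlv_succ : ∀ m, lv (m+1) = lv m - 1 ∨ (lv m = l1 + 1 ∧ lv (m+1) = l2) := by
    intro m
    have hmod : (m+1) % per = (m % per + 1) % per := (Nat.mod_add_mod m per 1).symm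
    have hq := Nat.mod_lt m hper0
    rcases Nat.lt_or_ge (m % per + 1) per with h | h
    · left
      simp only [hlv]
      rw [hmod, Nat.mod_eq_of_lt h]
      omega
    · right
      have hqe : m % per + 1 = per := by omega
      constructor
      · simp only [hlv]; omega
      · simp only [hlv]; rw [hmod, hqe, Nat.mod_self]; omega
  have hrange : ∀ m, 1 ≤ lv m ∧ lv m ≤ N - 1 := by
    intro m
    have := hlv_lb m
    omega
  -- apply noseq
  apply noseq (fun m => A (lv m)) (fun m => X (lv m - 1)) (fun m => T (lv m))
    (fun m => V (lv m))
  · intro m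
    show T (lv (m+1)) < X (lv m - 1) ∨ T (lv (m+1)) ≤ A (lv m)
    have hCB := (CB (lv m) (hrange m).1 (hrange m).2).1
    rcases hlv_succ m with h | ⟨h1', h2'⟩
    · rw [h]; exact hCB
    · rw [h2', ← eT]
      have : l1 = lv m - 1 := by omega
      rw [this]
      exact hCB
  · intro m
    show A (lv (m+1)) < max (A (lv m)) (X (lv m - 1)) ∨
      (A (lv (m+1)) ≤ A (lv m) ∧ T (lv (m+1)) < X (lv m - 1))
    have hCB := (CB (lv m) (hrange m).1 (hrange m).2).2
    rcases hlv_succ m with h | ⟨h1', h2'⟩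
    · rw [h]; exact hCB
    · rw [h2', ← eA, ← eT]
      have : l1 = lv m - 1 := by omega
      rw [this]
      exact hCB
  · intro m
    show X (lv m - 1) < T (lv m) ∨ X (lv m - 1) ≤ V (lv m)
    exact (CN (lv m) (hrange m).1 (hrange m).2).1
  · intro m
    show V (lv (m+1)) < max (T (lv m)) (V (lv m)) ∨
      (V (lv (m+1)) ≤ V (lv m) ∧ X (lv m - 1) < T (lv m))
    have hCN := (CN (lv m) (hrange m).1 (hrange m).2).2
    rcases hlv_succ m with h | ⟨h1', h2'⟩
    · rw [h]; exact hCN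
    · rw [h2', ← eV]
      have : l1 = lv m - 1 := by omega
      rw [this]
      exact hCN

end Zip

namespace Zip

lemma rZ_mono {M : ℕ} {x y : VV} (h : rZ M x y) : rZ (M+1) x y := by
  rcases h with h | ⟨i, hi, h⟩ | ⟨i, hi, h⟩
  · exact Or.inl h
  · exact Or.inr (Or.inl ⟨i, by omega, h⟩)
  · exact Or.inr (Or.inr ⟨i, by omega, h⟩)

lemma sZ_mono {M : ℕ} {x y : VV} (h : sZ M x y) : sZ (M+1) x y := by
  rcases h with ⟨i, hi, h⟩ | ⟨i, hi, h⟩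
  · exact Or.inl ⟨i, by omega, h⟩
  · exact Or.inr ⟨i, by omega, h⟩

lemma rZ_succ_iff {M : ℕ} {x y : VV} : rZ (M+1) x y ↔
    rZ M x y ∨ (x = pV (M+1) ∧ y = nV M) ∨ (x = nV M ∧ y = DV) := by
  constructor
  · rintro (h | ⟨i, hi, h1, h2⟩ | ⟨i, hi, h1, h2⟩)
    · exact Or.inl (Or.inl h)
    · rcases Nat.lt_or_ge i M with h' | h'
      · exact Or.inl (Or.inr (Or.inl ⟨i, h', h1, h2⟩))
      · have : i = M := by omega
        subst this
        exact Or.inr (Or.inl ⟨h1, h2⟩)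
    · rcases Nat.lt_or_ge i M with h' | h'
      · exact Or.inl (Or.inr (Or.inr ⟨i, h', h1, h2⟩))
      · have : i = M := by omega
        subst this
        exact Or.inr (Or.inr ⟨h1, h2⟩)
  · rintro (h | ⟨h1, h2⟩ | ⟨h1, h2⟩)
    · exact rZ_mono h
    · exact Or.inr (Or.inl ⟨M, by omega, h1, h2⟩)
    · exact Or.inr (Or.inr ⟨M, by omega, h1, h2⟩)

lemma sZ_succ_iff {M : ℕ} {x y : VV} : sZ (M+1) x y ↔
    sZ M x y ∨ (x = pV (M+1) ∧ y = DV) ∨ (x = nV M ∧ y = pV M) := by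
  constructor
  · rintro (⟨i, hi, h1, h2⟩ | ⟨i, hi, h1, h2⟩)
    · rcases Nat.lt_or_ge i (M+1) with h' | h'
      · exact Or.inl (Or.inl ⟨i, by omega, h1, h2⟩)
      · have : i = M+1 := by omega
        subst this
        exact Or.inr (Or.inl ⟨h1, h2⟩)
    · rcases Nat.lt_or_ge i M with h' | h'
      · exact Or.inl (Or.inr ⟨i, h', h1, h2⟩)
      · have : i = M := by omega
        subst this
        exact Or.inr (Or.inr ⟨h1, h2⟩)
  · rintro (h | ⟨h1, h2⟩ | ⟨h1, h2⟩)
    · exact sZ_mono h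
    · exact Or.inl ⟨M+1, by omega, h1, h2⟩
    · exact Or.inr ⟨M, by omega, h1, h2⟩

/-- Base case: `zip_0` is in `DC_n` for every `n ≥ 1`. -/
lemma dc_base (n : ℕ) (hn : 1 ≤ n) : DCord (n : Ordinal) (rZ 0) (sZ 0) := by
  refine ⟨fun _ => rZ 0, fun _ => sZ 0, fun x y => ⟨fun h => ⟨Lab n 0 hn, h⟩, fun ⟨_, h⟩ => h⟩,
    fun x y => ⟨fun h => ⟨Lab n 0 hn, h⟩, fun ⟨_, h⟩ => h⟩, ?_⟩
  intro α β a b c hg hf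
  have hab : a = pV 0 ∧ b = DV := by
    rcases hg with ⟨i, hi, h1, h2⟩ | ⟨i, hi, h1, h2⟩
    · have : i = 0 := by omega
      subst this; exact ⟨h1, h2⟩
    · omega
  have hc : c = DV := by
    rcases hf with ⟨h1, h2⟩ | ⟨i, hi, _⟩ | ⟨i, hi, _⟩
    · exact h2
    · omega
    · omega
  obtain ⟨ha, hb⟩ := hab
  subst hb
  subst hc
  exact ⟨DV, DV, DV, DV, DV, Relation.ReflTransGen.refl, Or.inr rfl,
    Relation.ReflTransGen.refl, Relation.ReflTransGen.refl, Or.inr rfl,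
    Relation.ReflTransGen.refl⟩

end Zip

namespace Zip

lemma ord_lt_succ_nat {n : ℕ} (i : {β : Ordinal // β < ((n+1 : ℕ) : Ordinal)}) :
    i.val < (n : Ordinal) ∨ i.val = (n : Ordinal) := by
  have h : i.val < (n : Ordinal) + 1 := by
    have hc : ((n+1 : ℕ) : Ordinal) = (n : Ordinal) + 1 := by push_cast; ring
    exact lt_of_lt_of_eq i.2 hc
  rw [Ordinal.add_one_eq_succ, Order.lt_succ_iff] at h
  exact lt_or_eq_of_le h

/-- Extension: from a `DC_n` structure on `zip_M` to a `DC_(n+1)` structure on `zip_(M+1)`. -/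
lemma dc_extend (n M : ℕ) (h : DCord (n : Ordinal) (rZ M) (sZ M)) :
    DCord ((n + 1 : ℕ) : Ordinal) (rZ (M+1)) (sZ (M+1)) := by
  obtain ⟨f, g, hr, hs, hDC⟩ := h
  have hcast : (n : Ordinal) < ((n+1 : ℕ) : Ordinal) := by exact_mod_cast Nat.lt_succ_self n
  set emb : {β : Ordinal // β < (n : Ordinal)} → {β : Ordinal // β < ((n+1 : ℕ) : Ordinal)} :=
    fun i => ⟨i.val, lt_trans i.2 hcast⟩ with hemb
  set newF : VV → VV → Prop :=
    fun u w => (u = pV (M+1) ∧ w = nV M) ∨ (u = nV M ∧ w = DV) with hnF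
  set newG : VV → VV → Prop :=
    fun u w => (u = pV (M+1) ∧ w = DV) ∨ (u = nV M ∧ w = pV M) with hnG
  set f' : {β : Ordinal // β < ((n+1 : ℕ) : Ordinal)} → VV → VV → Prop :=
    fun i => if h : i.val < (n : Ordinal) then f ⟨i.val, h⟩ else newF with hf'
  set g' : {β : Ordinal // β < ((n+1 : ℕ) : Ordinal)} → VV → VV → Prop :=
    fun i => if h : i.val < (n : Ordinal) then g ⟨i.val, h⟩ else newG with hg'
  have hf'emb : ∀ (i : {β : Ordinal // β < (n : Ordinal)}), f' (emb i) = f i := by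
    intro i
    simp only [hf', hemb]
    rw [dif_pos i.2]
  have hg'emb : ∀ (i : {β : Ordinal // β < (n : Ordinal)}), g' (emb i) = g i := by
    intro i
    simp only [hg', hemb]
    rw [dif_pos i.2]
  have hf'old : ∀ (i : {β : Ordinal // β < ((n+1 : ℕ) : Ordinal)}) (h : i.val < (n : Ordinal)),
      f' i = f ⟨i.val, h⟩ := by
    intro i h; simp only [hf']; rw [dif_pos h]
  have hg'old : ∀ (i : {β : Ordinal // β < ((n+1 : ℕ) : Ordinal)}) (h : i.val < (n : Ordinal)),
      g' i = g ⟨i.val, h⟩ := by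
    intro i h; simp only [hg']; rw [dif_pos h]
  have hf'top : ∀ (i : {β : Ordinal // β < ((n+1 : ℕ) : Ordinal)}),
      i.val = (n : Ordinal) → f' i = newF := by
    intro i h; simp only [hf']; rw [dif_neg (by rw [h]; exact lt_irrefl _)]
  have hg'top : ∀ (i : {β : Ordinal // β < ((n+1 : ℕ) : Ordinal)}),
      i.val = (n : Ordinal) → g' i = newG := by
    intro i h; simp only [hg']; rw [dif_neg (by rw [h]; exact lt_irrefl _)]
  -- Below transport for old labels
  have hBf : ∀ (ι : {β : Ordinal // β < ((n+1 : ℕ) : Ordinal)}) (hι : ι.val < (n : Ordinal))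
      (x y : VV),
      Below (fun i j => i.val < j.val) f' ι x y ↔
      Below (fun i j => i.val < j.val) f ⟨ι.val, hι⟩ x y := by
    intro ι hι x y
    constructor
    · rintro ⟨γ, hγlt, hγ⟩
      have hγn : γ.val < (n : Ordinal) := lt_trans hγlt hι
      refine ⟨⟨γ.val, hγn⟩, hγlt, ?_⟩
      rwa [hf'old γ hγn] at hγ
    · rintro ⟨δ, hδlt, hδ⟩
      refine ⟨emb δ, hδlt, ?_⟩
      rwa [hf'emb δ]
  have hBg : ∀ (ι : {β : Ordinal // β < ((n+1 : ℕ) : Ordinal)}) (hι : ι.val < (n : Ordinal))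
      (x y : VV),
      Below (fun i j => i.val < j.val) g' ι x y ↔
      Below (fun i j => i.val < j.val) g ⟨ι.val, hι⟩ x y := by
    intro ι hι x y
    constructor
    · rintro ⟨γ, hγlt, hγ⟩
      have hγn : γ.val < (n : Ordinal) := lt_trans hγlt hι
      refine ⟨⟨γ.val, hγn⟩, hγlt, ?_⟩
      rwa [hg'old γ hγn] at hγ
    · rintro ⟨δ, hδlt, hδ⟩
      refine ⟨emb δ, hδlt, ?_⟩
      rwa [hg'emb δ]
  refine ⟨f', g', ?_, ?_, ?_⟩
  · -- r decomposition
    intro x y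
    rw [rZ_succ_iff]
    constructor
    · rintro (h | ⟨h1, h2⟩ | ⟨h1, h2⟩)
      · obtain ⟨i, hi⟩ := (hr x y).mp h
        exact ⟨emb i, by rwa [hf'emb]⟩
      · refine ⟨⟨(n : Ordinal), hcast⟩, ?_⟩
        rw [hf'top _ rfl]
        exact Or.inl ⟨h1, h2⟩
      · refine ⟨⟨(n : Ordinal), hcast⟩, ?_⟩
        rw [hf'top _ rfl]
        exact Or.inr ⟨h1, h2⟩
    · rintro ⟨i, hi⟩
      rcases ord_lt_succ_nat i with h | h
      · rw [hf'old i h] at hi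
        exact Or.inl ((hr x y).mpr ⟨_, hi⟩)
      · rw [hf'top i h] at hi
        rcases hi with ⟨h1, h2⟩ | ⟨h1, h2⟩
        · exact Or.inr (Or.inl ⟨h1, h2⟩)
        · exact Or.inr (Or.inr ⟨h1, h2⟩)
  · -- s decomposition
    intro x y
    rw [sZ_succ_iff]
    constructor
    · rintro (h | ⟨h1, h2⟩ | ⟨h1, h2⟩)
      · obtain ⟨i, hi⟩ := (hs x y).mp h
        exact ⟨emb i, by rwa [hg'emb]⟩
      · refine ⟨⟨(n : Ordinal), hcast⟩, ?_⟩
        rw [hg'top _ rfl]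
        exact Or.inl ⟨h1, h2⟩
      · refine ⟨⟨(n : Ordinal), hcast⟩, ?_⟩
        rw [hg'top _ rfl]
        exact Or.inr ⟨h1, h2⟩
    · rintro ⟨i, hi⟩
      rcases ord_lt_succ_nat i with h | h
      · rw [hg'old i h] at hi
        exact Or.inl ((hs x y).mpr ⟨_, hi⟩)
      · rw [hg'top i h] at hi
        rcases hi with ⟨h1, h2⟩ | ⟨h1, h2⟩
        · exact Or.inr (Or.inl ⟨h1, h2⟩)
        · exact Or.inr (Or.inr ⟨h1, h2⟩)
  · -- DCommuting
    intro α β a b c hgab hfac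
    rcases ord_lt_succ_nat α with hα | hα
    · -- α is an old label
      rcases ord_lt_succ_nat β with hβ | hβ
      · -- both old: transport the old diagram
        rw [hg'old α hα] at hgab
        rw [hf'old β hβ] at hfac
        obtain ⟨b', b'', c', c'', d, H1, H2, H3, H4, H5, H6⟩ :=
          hDC ⟨α.val, hα⟩ ⟨β.val, hβ⟩ a b c hgab hfac
        refine ⟨b', b'', c', c'', d, ?_, ?_, ?_, ?_, ?_, ?_⟩
        · exact Relation.ReflTransGen.mono (fun x y hxy => (hBf α hα x y).mpr hxy) _ _ H1
        · rcases H2 with H2 | H2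
          · exact Or.inl (by rwa [hf'old β hβ])
          · exact Or.inr H2
        · exact Relation.ReflTransGen.mono (fun x y hxy => by
            rcases hxy with hxy | hxy
            · exact Or.inl ((hBf α hα x y).mpr hxy)
            · exact Or.inr ((hBf β hβ x y).mpr hxy)) _ _ H3
        · exact Relation.ReflTransGen.mono (fun x y hxy => (hBg β hβ x y).mpr hxy) _ _ H4
        · rcases H5 with H5 | H5
          · exact Or.inl (by rwa [hg'old α hα])
          · exact Or.inr H5
        · exact Relation.ReflTransGen.mono (fun x y hxy => by
            rcases hxy with hxy | hxy
            · exact Or.inl ((hBg α hα x y).mpr hxy)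
            · exact Or.inr ((hBg β hβ x y).mpr hxy)) _ _ H6
      · -- α old, β top: impossible peak
        rw [hg'old α hα] at hgab
        rw [hf'top β hβ] at hfac
        exfalso
        have hsab := (hs a b).mpr ⟨_, hgab⟩
        rcases hfac with ⟨h1, _⟩ | ⟨h1, _⟩
        · subst h1
          have := sZ_p hsab
          omega
        · subst h1
          have := sZ_n hsab
          omega
    · -- α top
      rw [hg'top α hα] at hgab
      rcases hgab with ⟨h1, h2⟩ | ⟨h1, h2⟩
      · -- a = pV (M+1), b = DV
        subst h1; subst h2
        rcases ord_lt_succ_nat β with hβ | hβ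
        · exfalso
          rw [hf'old β hβ] at hfac
          have hrac := (hr _ _).mpr ⟨_, hfac⟩
          rcases rZ_p hrac with ⟨h0, _⟩ | ⟨j, hj1, hj2, _⟩
          · omega
          · omega
        · rw [hf'top β hβ] at hfac
          have hc : c = nV M := by
            rcases hfac with ⟨_, h2⟩ | ⟨h1, _⟩
            · exact h2
            · exfalso; simp [pV, nV] at h1
          subst hc
          -- join at DV
          obtain ⟨iz, hiz⟩ := (hs (pV M) DV).mp (Or.inl ⟨M, le_refl M, rfl, rfl⟩)
          refine ⟨DV, DV, nV M, pV M, DV, Relation.ReflTransGen.refl, Or.inr rfl,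
            Relation.ReflTransGen.refl, Relation.ReflTransGen.refl, ?_, ?_⟩
          · left
            rw [hg'top α hα]
            exact Or.inr ⟨rfl, rfl⟩
          · refine Relation.ReflTransGen.single (Or.inl ⟨emb iz, ?_, ?_⟩)
            · show (emb iz).val < α.val
              rw [hα]
              exact iz.2
            · rw [hg'emb]
              exact hiz
      · -- a = nV M, b = pV M
        subst h1; subst h2
        rcases ord_lt_succ_nat β with hβ | hβ
        · exfalso
          rw [hf'old β hβ] at hfac
          have hrac := (hr _ _).mpr ⟨_, hfac⟩
          have := rZ_n hrac
          omega
        · rw [hf'top β hβ] at hfac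
          have hc : c = DV := by
            rcases hfac with ⟨h1, _⟩ | ⟨_, h2⟩
            · exfalso; simp [pV, nV] at h1
            · exact h2
          subst hc
          -- join at DV; b-side walks pV M ⟶ DV through old edges
          have hwalk : Relation.ReflTransGen
              (Below (fun i j => i.val < j.val) f' α) (pV M) DV := by
            rcases Nat.eq_zero_or_pos M with hM | hM
            · subst hM
              obtain ⟨ix, hix⟩ := (hr (pV 0) DV).mp (Or.inl ⟨rfl, rfl⟩)
              refine Relation.ReflTransGen.single ⟨emb ix, ?_, ?_⟩
              · show (emb ix).val < α.val
                rw [hα]; exact ix.2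
              · rw [hf'emb]; exact hix
            · obtain ⟨M', rfl⟩ : ∃ M', M = M' + 1 := ⟨M - 1, by omega⟩
              obtain ⟨ix, hix⟩ := (hr (pV (M'+1)) (nV M')).mp
                (Or.inr (Or.inl ⟨M', by omega, rfl, rfl⟩))
              obtain ⟨iv, hiv⟩ := (hr (nV M') DV).mp
                (Or.inr (Or.inr ⟨M', by omega, rfl, rfl⟩))
              refine Relation.ReflTransGen.head (b := nV M') ⟨emb ix, ?_, ?_⟩
                (Relation.ReflTransGen.single ⟨emb iv, ?_, ?_⟩)
              · show (emb ix).val < α.val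
                rw [hα]; exact ix.2
              · rw [hf'emb]; exact hix
              · show (emb iv).val < α.val
                rw [hα]; exact iv.2
              · rw [hf'emb]; exact hiv
          exact ⟨DV, DV, DV, DV, DV, hwalk, Or.inr rfl, Relation.ReflTransGen.refl,
            Relation.ReflTransGen.refl, Or.inr rfl, Relation.ReflTransGen.refl⟩

end Zip

namespace Zip

/-- A surjection from ℕ onto the vertex type. -/
lemma vv_countable : ∃ h : ℕ → VV, Function.Surjective h := by
  refine ⟨fun k => match k with
    | 0 => DV
    | (m+1) => if m % 2 = 0 then pV (m/2) else nV (m/2), ?_⟩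
  rintro (_ | ⟨b, i⟩)
  · exact ⟨0, rfl⟩
  · cases b
    · refine ⟨2*i+2, ?_⟩
      have h1 : (2*i+1) % 2 = 1 := by omega
      have h2 : (2*i+1) / 2 = i := by omega
      simp only [h1, h2]
      norm_num [nV]
    · refine ⟨2*i+1, ?_⟩
      have h1 : (2*i) % 2 = 0 := by omega
      have h2 : (2*i) / 2 = i := by omega
      simp only [h1, h2]
      norm_num [pV]

theorem stmt18' (n : ℕ) :
    ∃ (A : Type) (r s : A → A → Prop),
      Nonempty A ∧ (∃ h : ℕ → A, Function.Surjective h) ∧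
      DCord ((n + 1 : ℕ) : Ordinal) r s ∧ ¬ DCord (n : Ordinal) r s := by
  rcases Nat.eq_zero_or_pos n with hn | hn
  · -- n = 0 : a single r-loop and empty s
    subst hn
    refine ⟨ℕ, fun a b => a = 0 ∧ b = 0, fun _ _ => False, ⟨0⟩, ⟨id, fun a => ⟨a, rfl⟩⟩, ?_, ?_⟩
    · refine ⟨fun _ a b => a = 0 ∧ b = 0, fun _ _ _ => False, ?_, ?_, ?_⟩
      · intro x y
        exact ⟨fun h => ⟨Lab 1 0 Nat.one_pos, h⟩, fun ⟨_, h⟩ => h⟩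
      · intro x y
        exact ⟨fun h => h.elim, fun ⟨_, h⟩ => h.elim⟩
      · intro α β a b c hg _
        exact hg.elim
    · rintro ⟨f, g, hr, hs, hDC⟩
      obtain ⟨i, _⟩ := (hr 0 0).mp ⟨rfl, rfl⟩
      have := i.2
      simp at this
  · -- n ≥ 1 : use the zip family at the critical depth
    set S : Set ℕ := {N | DCord (n : Ordinal) (rZ N) (sZ N)} with hS
    have h0 : 0 ∈ S := dc_base n hn
    have hbdd : BddAbove S := by
      refine ⟨n^4 + 1, fun N hN => ?_⟩
      by_contra hcon
      exact not_dc n N hn (by omega) hN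
    have hM : sSup S ∈ S := Nat.sSup_mem ⟨0, h0⟩ hbdd
    refine ⟨VV, rZ (sSup S + 1), sZ (sSup S + 1), ⟨DV⟩, vv_countable, ?_, ?_⟩
    · exact dc_extend n (sSup S) hM
    · intro hcon
      have : sSup S + 1 ∈ S := hcon
      have := le_csSup hbdd this
      omega

end Zip

/-- the inclusion `DC_n ⊆ DC_{n+1}` is strict, even for countable systems. -/
theorem stmt18 (n : ℕ) :
    ∃ (A : Type) (r s : A → A → Prop),
      Nonempty A ∧ (∃ h : ℕ → A, Function.Surjective h) ∧
      DCord ((n + 1 : ℕ) : Ordinal) r s ∧ ¬ DCord (n : Ordinal) r s := by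
  exact Zip.stmt18' n
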